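/- arXiv:1909.00163 — 2 statements merged into one kernel-verified Lean document; each statement's English description precedes it below -/
import Mathlib

section
/- For all real α > 0 and all real a ≥ 0, ∫₀^∞ e^{-αt} · e^{-a²/(2t)} / √(2πt) dt = (1/√(2α)) e^{-√(2α)·a}. -/
open MeasureTheory Real Set

/-!
Substituting `t = s ^ 2` turns the integral into `2 / √(2π) · ∫₀^∞ exp (-α s² - (a² / 2) / s²) ds`.
Completing the square, `-b s² - c / s² = -(√b s - √c / s)² - 2 √(b c)`, so everything reduces to
the Cauchy–Schlömilch identity `∫₀^∞ exp (-(p s - q / s)²) ds = √π / (2 p)`. For it, the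
substitution `u = p s - q / s` maps `(0, ∞)` onto `ℝ` with `du = (p + q / s²) ds`, so the
integrand weighted by `p + q / s²` integrates to the Gaussian integral `√π`; the involution
`s ↦ (q / p) / s` preserves the integrand and shows that the weights `p` and `q / s²` contribute
equally.
-/

variable {F : Type*} [NormedAddCommGroup F] [NormedSpace ℝ F]

theorem integral_comp_sq_Ioi (g : ℝ → F) :
    ∫ s in Ioi 0, (2 * s) • g (s ^ 2) = ∫ t in Ioi 0, g t := by
  rw [← integral_comp_rpow_Ioi_of_pos (g := g) two_pos]
  refine setIntegral_congr_fun measurableSet_Ioi fun s _ => ?_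
  norm_num [rpow_two]

theorem image_const_div_Ioi {c : ℝ} (hc : 0 < c) : (c / ·) '' Ioi (0 : ℝ) = Ioi 0 := by
  refine Subset.antisymm (image_subset_iff.mpr fun s hs => div_pos hc hs) fun t ht => ?_
  exact ⟨c / t, div_pos hc ht, div_div_cancel₀ hc.ne'⟩

theorem integral_div_sq_smul_comp_div_Ioi (g : ℝ → F) {c : ℝ} (hc : 0 < c) :
    ∫ s in Ioi 0, (c / s ^ 2) • g (c / s) = ∫ t in Ioi 0, g t := by
  have hderiv (s : ℝ) (hs : s ∈ Ioi (0 : ℝ)) :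
      HasDerivWithinAt (c / ·) (-(c / s ^ 2)) (Ioi 0) s := by
    simpa [div_eq_mul_inv, neg_div] using
      ((hasDerivAt_inv (ne_of_gt hs)).const_mul c).hasDerivWithinAt
  have hinj : InjOn (c / ·) (Ioi (0 : ℝ)) := fun s _ t _ hst => by
    simpa [div_eq_mul_inv, hc.ne'] using hst
  have := integral_image_eq_integral_abs_deriv_smul measurableSet_Ioi hderiv hinj g
  rw [image_const_div_Ioi hc] at this
  rw [this]
  refine setIntegral_congr_fun measurableSet_Ioi fun s hs => ?_
  rw [abs_neg, abs_of_pos (div_pos hc (pow_pos hs 2))]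

section CauchySchlomilch

variable {p q : ℝ}

theorem hasDerivAt_mul_sub_div {s : ℝ} (hs : s ≠ 0) :
    HasDerivAt (fun s => p * s - q / s) (p + q / s ^ 2) s := by
  have h : HasDerivAt (fun s => p * s - q * s⁻¹) (p * 1 - q * -(s ^ 2)⁻¹) s :=
    ((hasDerivAt_id s).const_mul p).sub ((hasDerivAt_inv hs).const_mul q)
  simp only [div_eq_mul_inv]
  exact h.congr_deriv (by ring)

theorem strictMonoOn_mul_sub_div_Ioi (hp : 0 < p) (hq : 0 ≤ q) :
    StrictMonoOn (fun s => p * s - q / s) (Ioi 0) := fun s hs t _ hst => by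
  have := div_le_div_of_nonneg_left hq hs hst.le
  have := mul_lt_mul_of_pos_left hst hp
  dsimp only
  linarith

theorem image_mul_sub_div_Ioi (hp : 0 < p) (hq : 0 < q) :
    (fun s => p * s - q / s) '' Ioi 0 = univ := by
  refine eq_univ_of_forall fun y => ?_
  -- the positive root of `p s ^ 2 - y s - q`
  set r := √(y ^ 2 + 4 * p * q)
  have hr : r ^ 2 = y ^ 2 + 4 * p * q := sq_sqrt (by positivity)
  have hyr : 0 < y + r := by nlinarith [sqrt_nonneg (y ^ 2 + 4 * p * q)]
  refine ⟨(y + r) / (2 * p), div_pos hyr (by positivity), ?_⟩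
  field_simp
  nlinarith

theorem integral_comp_mul_sub_div_Ioi (g : ℝ → F) (hp : 0 < p) (hq : 0 < q) :
    ∫ s in Ioi 0, (p + q / s ^ 2) • g (p * s - q / s) = ∫ x, g x := by
  have := integral_image_eq_integral_abs_deriv_smul measurableSet_Ioi
    (fun s hs => (hasDerivAt_mul_sub_div (ne_of_gt hs)).hasDerivWithinAt)
    (strictMonoOn_mul_sub_div_Ioi hp hq.le).injOn g
  rw [image_mul_sub_div_Ioi hp hq, Measure.restrict_univ] at this
  rw [this]
  refine setIntegral_congr_fun measurableSet_Ioi fun s _ => ?_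
  rw [abs_of_pos (by positivity)]

theorem integrableOn_comp_mul_sub_div_Ioi_iff (g : ℝ → F) (hp : 0 < p) (hq : 0 < q) :
    IntegrableOn (fun s => (p + q / s ^ 2) • g (p * s - q / s)) (Ioi 0) ↔ Integrable g := by
  have := integrableOn_image_iff_integrableOn_abs_deriv_smul measurableSet_Ioi
    (fun s hs => (hasDerivAt_mul_sub_div (ne_of_gt hs)).hasDerivWithinAt)
    (strictMonoOn_mul_sub_div_Ioi hp hq.le).injOn g
  rw [image_mul_sub_div_Ioi hp hq, integrableOn_univ] at this
  rw [this]
  refine integrableOn_congr_fun (fun s hs => ?_) measurableSet_Ioi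
  rw [abs_of_pos (by positivity)]

theorem integrableOn_exp_neg_sq_mul_sub_div (hp : 0 < p) :
    IntegrableOn (fun s => exp (-(p * s - q / s) ^ 2)) (Ioi 0) := by
  have hgauss : Integrable fun s : ℝ => exp (2 * p * q) * exp (-p ^ 2 * s ^ 2) :=
    (integrable_exp_neg_mul_sq (by positivity)).const_mul _
  refine hgauss.integrableOn.mono' (by fun_prop (disch := exact ne_of_gt ‹_›)) ?_
  filter_upwards [ae_restrict_mem measurableSet_Ioi] with s (hs : 0 < s)
  rw [norm_of_nonneg (exp_nonneg _), ← exp_add, exp_le_exp]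
  have : (p * s - q / s) ^ 2 = p ^ 2 * s ^ 2 - 2 * p * q + (q / s) ^ 2 := by
    field_simp
    ring
  nlinarith [sq_nonneg (q / s)]

theorem integral_exp_neg_sq_mul_sub_div_Ioi (hp : 0 < p) (hq : 0 ≤ q) :
    ∫ s in Ioi 0, exp (-(p * s - q / s) ^ 2) = √π / (2 * p) := by
  rcases hq.eq_or_lt with rfl | hq
  · simp_rw [zero_div, sub_zero, mul_pow, ← neg_mul, integral_gaussian_Ioi,
      sqrt_div pi_pos.le, sqrt_sq hp.le]
    ring
  set E := fun s => exp (-(p * s - q / s) ^ 2)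
  have hE : IntegrableOn E (Ioi 0) := integrableOn_exp_neg_sq_mul_sub_div hp
  have hweighted : IntegrableOn (fun s => (p + q / s ^ 2) * E s) (Ioi 0) :=
    (integrableOn_comp_mul_sub_div_Ioi_iff (fun x => exp (-x ^ 2)) hp hq).mpr
      (by simpa using integrable_exp_neg_mul_sq one_pos)
  have hsum : ∫ s in Ioi 0, (p + q / s ^ 2) * E s = √π := by
    calc _ = ∫ x, exp (-x ^ 2) := integral_comp_mul_sub_div_Ioi (fun x => exp (-x ^ 2)) hp hq
      _ = √π := by simpa using integral_gaussian 1
  have hsym : ∫ s in Ioi 0, q / s ^ 2 * E s = p * ∫ s in Ioi 0, E s := by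
    rw [← integral_div_sq_smul_comp_div_Ioi E (div_pos hq hp), ← integral_const_mul]
    refine setIntegral_congr_fun measurableSet_Ioi fun s (hs : 0 < s) => ?_
    have : p * (q / p / s) - q / (q / p / s) = -(p * s - q / s) := by
      field_simp
      ring
    simp only [E, smul_eq_mul, this, neg_sq]
    field_simp
  have hdiff : ∫ s in Ioi 0, q / s ^ 2 * E s = √π - p * ∫ s in Ioi 0, E s := by
    rw [← hsum, ← integral_const_mul, ← integral_sub hweighted (hE.const_mul p)]
    congr 1 with s
    ring
  field_simp
  linarith

theorem integral_exp_neg_mul_sq_sub_div_sq_Ioi {b c : ℝ} (hb : 0 < b) (hc : 0 ≤ c) :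
    ∫ s in Ioi 0, exp (-b * s ^ 2 - c / s ^ 2) = √π / (2 * √b) * exp (-2 * √(b * c)) := by
  have hsplit : EqOn (fun s => exp (-b * s ^ 2 - c / s ^ 2))
      (fun s => exp (-2 * √(b * c)) * exp (-(√b * s - √c / s) ^ 2)) (Ioi 0) := by
    intro s (hs : 0 < s)
    dsimp only
    rw [← exp_add, sqrt_mul hb.le]
    congr 1
    field_simp
    linear_combination s ^ 4 * sq_sqrt hb.le + sq_sqrt hc
  rw [setIntegral_congr_fun measurableSet_Ioi hsplit, integral_const_mul,
    integral_exp_neg_sq_mul_sub_div_Ioi (sqrt_pos.2 hb) (sqrt_nonneg c), mul_comm]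

end CauchySchlomilch

/-- For α > 0 and a ≥ 0,
∫₀^∞ e^{-αt} e^{-a²/(2t)} / √(2πt) dt = (1/√(2α)) e^{-√(2α) a}. -/
theorem stmt1 (α a : ℝ) (hα : 0 < α) (ha : 0 ≤ a) :
    ∫ t in Ioi (0:ℝ),
        Real.exp (-α * t) * Real.exp (-a ^ 2 / (2 * t)) / Real.sqrt (2 * π * t)
      = (1 / Real.sqrt (2 * α)) * Real.exp (-Real.sqrt (2 * α) * a) := by
  rw [← integral_comp_sq_Ioi]
  have hintegrand : EqOn
      (fun s => (2 * s) • (exp (-α * s ^ 2) * exp (-a ^ 2 / (2 * s ^ 2)) / √(2 * π * s ^ 2)))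
      (fun s => 2 / √(2 * π) * exp (-α * s ^ 2 - (a ^ 2 / 2) / s ^ 2)) (Ioi 0) := by
    intro s (hs : 0 < s)
    dsimp only
    rw [smul_eq_mul, sqrt_mul (by positivity), sqrt_sq hs.le, sub_eq_add_neg, exp_add]
    field_simp
  have hexponent : -2 * √(α * (a ^ 2 / 2)) = -√(2 * α) * a := by
    rw [show α * (a ^ 2 / 2) = (√(2 * α) * a / 2) ^ 2 by
      rw [div_pow, mul_pow, sq_sqrt (by positivity)]; ring, sqrt_sq (by positivity)]
    ring
  rw [setIntegral_congr_fun measurableSet_Ioi hintegrand, integral_const_mul,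
    integral_exp_neg_mul_sq_sub_div_sq_Ioi hα (by positivity), hexponent,
    sqrt_mul zero_le_two, sqrt_mul zero_le_two]
  field_simp
end

section
/- For α > 0 and 0 < x < x₀, the identity ∫₀^∞ e^{-αt} ∫_{x₀}^∞ y·(e^{-(y-x)²/(2t)} − e^{-(y+x)²/(2t)})/√(2πt) dy dt = (1/α)·(1/(2√(2α)) + x₀/2)·e^{-√(2α)x₀}·(e^{√(2α)x} − e^{-√(2α)x}) holds. -/
/-!
Substituting `t = u² / α` turns the Laplace transform `∫₀^∞ e^{-αt} p_t(a) dt` of the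
Gaussian kernel `p_t(a) = e^{-a²/2t} / √(2πt)` into a multiple of `∫₀^∞ exp (-(u² + c²/u²)) du`
with `c = a √(2α) / 2`. The Cauchy–Schlömilch substitution `w = u - c/u` evaluates the latter to
`(√π / 2) e^{-2c}`, so `∫₀^∞ e^{-αt} p_t(a) dt = e^{-βa} / β` with `β = √(2α)`, and by the
method of images the resolvent density of Brownian motion killed at `0` is
`(e^{βx} - e^{-βx}) e^{-βy} / β`. The integrand is nonnegative, so Tonelli lets us integrate in
`t` first, and what remains is the elementary `∫_{x₀}^∞ y e^{-βy} dy = (x₀/β + 1/β²) e^{-βx₀}`.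
-/

open MeasureTheory Real Set Filter Asymptotics

section ChangeOfVariables

variable {E : Type*} [NormedAddCommGroup E] [NormedSpace ℝ E] {c α : ℝ}

theorem image_const_div_Ioi_zero (hc : 0 < c) : (fun u : ℝ => c / u) '' Ioi 0 = Ioi 0 := by
  refine Subset.antisymm (image_subset_iff.2 fun u hu => div_pos hc hu) fun w hw => ?_
  exact ⟨c / w, div_pos hc hw, div_div_cancel₀ hc.ne'⟩

theorem injective_const_div (hc : c ≠ 0) : Function.Injective fun u : ℝ => c / u :=
  fun u v h => inv_injective (mul_right_injective₀ hc (by simpa only [div_eq_mul_inv] using h))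

theorem integral_Ioi_comp_const_div (hc : 0 < c) (g : ℝ → E) :
    ∫ u in Ioi 0, (c / u ^ 2) • g (c / u) = ∫ u in Ioi 0, g u := by
  have hderiv : ∀ u ∈ Ioi (0 : ℝ), HasDerivWithinAt (fun v => c / v) (-(c / u ^ 2)) (Ioi 0) u :=
    fun u hu => by
      simpa [div_eq_mul_inv] using ((hasDerivAt_inv (ne_of_gt hu)).const_mul c).hasDerivWithinAt
  have := integral_image_eq_integral_abs_deriv_smul measurableSet_Ioi hderiv
    (injective_const_div hc.ne').injOn g
  rw [image_const_div_Ioi_zero hc] at this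
  rw [this]
  refine setIntegral_congr_fun measurableSet_Ioi fun u (hu : 0 < u) => ?_
  rw [abs_neg, abs_of_pos (by positivity)]

theorem image_sub_const_div_Ioi_zero (hc : 0 < c) :
    (fun u : ℝ => u - c / u) '' Ioi 0 = univ := by
  refine eq_univ_of_forall fun w => ?_
  set s := √(w ^ 2 + 4 * c)
  have hs : s ^ 2 = w ^ 2 + 4 * c := sq_sqrt (by positivity)
  have hws : |w| < s := by
    rw [← sqrt_sq_eq_abs]
    exact sqrt_lt_sqrt (sq_nonneg w) (by linarith)
  have hu : 0 < (w + s) / 2 := by linarith [neg_abs_le w]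
  have hdiv : c / ((w + s) / 2) = (s - w) / 2 := by
    rw [div_eq_iff hu.ne']
    linear_combination -hs / 4
  exact ⟨(w + s) / 2, hu, by simp only [hdiv]; ring⟩

theorem injOn_sub_const_div (hc : 0 < c) : InjOn (fun u : ℝ => u - c / u) (Ioi 0) := by
  intro u (hu : 0 < u) v (hv : 0 < v) h
  have key : (u - v) * (u * v + c) = 0 := by
    field_simp at h
    linear_combination h
  have : u * v + c ≠ 0 := by positivity
  exact sub_eq_zero.1 ((mul_eq_zero.1 key).resolve_right this)

theorem hasDerivAt_sub_const_div {u : ℝ} (hu : u ≠ 0) :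
    HasDerivAt (fun v => v - c / v) (1 + c / u ^ 2) u := by
  have h := (hasDerivAt_id u).sub ((hasDerivAt_inv hu).const_mul c)
  rw [show 1 + c / u ^ 2 = 1 - c * -(u ^ 2)⁻¹ by ring]
  exact h.congr_of_eventuallyEq (.of_forall fun v => by simp [div_eq_mul_inv])

theorem integral_Ioi_comp_sub_const_div (hc : 0 < c) (g : ℝ → E) :
    ∫ u in Ioi 0, (1 + c / u ^ 2) • g (u - c / u) = ∫ w, g w := by
  have := integral_image_eq_integral_abs_deriv_smul measurableSet_Ioi
    (fun u hu => (hasDerivAt_sub_const_div (ne_of_gt hu)).hasDerivWithinAt)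
    (injOn_sub_const_div hc) g
  rw [image_sub_const_div_Ioi_zero hc, setIntegral_univ] at this
  rw [this]
  refine setIntegral_congr_fun measurableSet_Ioi fun u (hu : 0 < u) => ?_
  rw [abs_of_pos (by positivity)]

theorem integrableOn_Ioi_comp_sub_const_div_iff (hc : 0 < c) (g : ℝ → E) :
    IntegrableOn (fun u => (1 + c / u ^ 2) • g (u - c / u)) (Ioi 0) ↔ Integrable g := by
  have := integrableOn_image_iff_integrableOn_abs_deriv_smul measurableSet_Ioi
    (fun u hu => (hasDerivAt_sub_const_div (ne_of_gt hu)).hasDerivWithinAt)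
    (injOn_sub_const_div hc) g
  rw [image_sub_const_div_Ioi_zero hc, integrableOn_univ] at this
  rw [this]
  refine integrableOn_congr_fun (fun u (hu : 0 < u) => ?_) measurableSet_Ioi
  rw [abs_of_pos (by positivity)]

theorem integrableOn_Ioi_comp_sub_const_div (hc : 0 < c) {g : ℝ → E} (hg : StronglyMeasurable g)
    (hg_int : Integrable g) : IntegrableOn (fun u => g (u - c / u)) (Ioi 0) := by
  refine ((integrableOn_Ioi_comp_sub_const_div_iff hc g).2 hg_int).norm.mono'
    (hg.comp_measurable (by fun_prop)).aestronglyMeasurable ?_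
  filter_upwards [ae_restrict_mem measurableSet_Ioi] with u (hu : 0 < u)
  rw [norm_smul, Real.norm_of_nonneg (by positivity)]
  exact le_mul_of_one_le_left (norm_nonneg _) (le_add_of_nonneg_right (by positivity))

/-- The Cauchy–Schlömilch transformation. -/
theorem integral_Ioi_comp_sub_const_div_of_even (hc : 0 < c) {g : ℝ → E}
    (hg : StronglyMeasurable g) (hg_int : Integrable g) (hg_even : ∀ w, g (-w) = g w) :
    ∫ u in Ioi 0, g (u - c / u) = (2 : ℝ)⁻¹ • ∫ w, g w := by
  have hinv : ∫ u in Ioi 0, (c / u ^ 2) • g (u - c / u) = ∫ u in Ioi 0, g (u - c / u) := by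
    rw [← integral_Ioi_comp_const_div hc fun v => g (v - c / v)]
    refine setIntegral_congr_fun measurableSet_Ioi fun u (hu : 0 < u) => ?_
    rw [div_div_cancel₀ hc.ne', ← hg_even, neg_sub]
  have hsplit : ∫ u in Ioi 0, (c / u ^ 2) • g (u - c / u)
      = (∫ w, g w) - ∫ u in Ioi 0, g (u - c / u) := by
    rw [← integral_Ioi_comp_sub_const_div hc g, ← integral_sub
      ((integrableOn_Ioi_comp_sub_const_div_iff hc g).2 hg_int)
      (integrableOn_Ioi_comp_sub_const_div hc hg hg_int)]
    simp only [add_smul, one_smul, add_sub_cancel_left]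
  rw [hinv, eq_sub_iff_add_eq, ← two_smul ℝ] at hsplit
  rw [← hsplit, smul_smul, inv_mul_cancel₀ two_ne_zero, one_smul]

theorem image_sq_div_Ioi_zero (hα : 0 < α) : (fun u : ℝ => u ^ 2 / α) '' Ioi 0 = Ioi 0 := by
  refine Subset.antisymm (image_subset_iff.2 fun u (hu : 0 < u) => show 0 < u ^ 2 / α by
    positivity) fun t (ht : 0 < t) => ?_
  refine ⟨√(α * t), sqrt_pos.2 (by positivity), ?_⟩
  simp only [sq_sqrt (by positivity : 0 ≤ α * t)]
  field_simp

theorem injOn_sq_div (hα : 0 < α) : InjOn (fun u : ℝ => u ^ 2 / α) (Ioi 0) :=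
  fun u (hu : 0 < u) v (hv : 0 < v) h =>
    (pow_left_inj₀ hu.le hv.le two_ne_zero).1 ((div_left_inj' hα.ne').1 h)

theorem hasDerivAt_sq_div (u : ℝ) : HasDerivAt (fun v => v ^ 2 / α) (2 * u / α) u := by
  simpa using (hasDerivAt_pow 2 u).div_const α

theorem integral_Ioi_comp_sq_div (hα : 0 < α) (g : ℝ → E) :
    ∫ u in Ioi 0, (2 * u / α) • g (u ^ 2 / α) = ∫ t in Ioi 0, g t := by
  have := integral_image_eq_integral_abs_deriv_smul measurableSet_Ioi
    (fun u _ => (hasDerivAt_sq_div u).hasDerivWithinAt) (injOn_sq_div hα) g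
  rw [image_sq_div_Ioi_zero hα] at this
  rw [this]
  refine setIntegral_congr_fun measurableSet_Ioi fun u (hu : 0 < u) => ?_
  rw [abs_of_pos (by positivity)]

theorem integrableOn_Ioi_comp_sq_div_iff (hα : 0 < α) (g : ℝ → E) :
    IntegrableOn (fun u => (2 * u / α) • g (u ^ 2 / α)) (Ioi 0) ↔ IntegrableOn g (Ioi 0) := by
  have := integrableOn_image_iff_integrableOn_abs_deriv_smul measurableSet_Ioi
    (fun u _ => (hasDerivAt_sq_div u).hasDerivWithinAt) (injOn_sq_div hα) g
  rw [image_sq_div_Ioi_zero hα] at this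
  rw [this]
  refine integrableOn_congr_fun (fun u (hu : 0 < u) => ?_) measurableSet_Ioi
  rw [abs_of_pos (by positivity)]

end ChangeOfVariables

theorem exp_neg_sq_add_sq_div_sq {c u : ℝ} (hu : u ≠ 0) :
    exp (-(u ^ 2 + c ^ 2 / u ^ 2)) = exp (-(2 * c)) * exp (-(u - c / u) ^ 2) := by
  rw [← exp_add]
  congr 1
  field_simp
  ring

theorem integral_Ioi_exp_neg_sq_add_sq_div_sq {c : ℝ} (hc : 0 < c) :
    ∫ u in Ioi 0, exp (-(u ^ 2 + c ^ 2 / u ^ 2)) = √π / 2 * exp (-(2 * c)) := by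
  have hgauss : ∫ u in Ioi 0, exp (-(u - c / u) ^ 2) = √π / 2 := by
    have h := integral_Ioi_comp_sub_const_div_of_even hc (g := fun w => exp (-w ^ 2))
      (by fun_prop) (by simpa using integrable_exp_neg_mul_sq one_pos) (by simp)
    simpa [div_eq_inv_mul] using h.trans (by simpa using integral_gaussian 1)
  rw [setIntegral_congr_fun measurableSet_Ioi fun u hu => exp_neg_sq_add_sq_div_sq (ne_of_gt hu),
    integral_const_mul, hgauss, mul_comm]

theorem integrableOn_Ioi_exp_neg_sq_add_sq_div_sq {c : ℝ} (hc : 0 < c) :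
    IntegrableOn (fun u => exp (-(u ^ 2 + c ^ 2 / u ^ 2))) (Ioi 0) := by
  refine IntegrableOn.congr_fun ?_
    (fun u hu => (exp_neg_sq_add_sq_div_sq (ne_of_gt hu)).symm) measurableSet_Ioi
  exact (integrableOn_Ioi_comp_sub_const_div hc (g := fun w => exp (-w ^ 2)) (by fun_prop)
    (by simpa using integrable_exp_neg_mul_sq one_pos)).const_mul _

noncomputable def heatKernel (t a : ℝ) : ℝ := exp (-a ^ 2 / (2 * t)) / √(2 * π * t)

theorem sq_div_smul_exp_mul_heatKernel {α a u : ℝ} (hα : 0 < α) (hu : 0 < u) :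
    (2 * u / α) • (exp (-α * (u ^ 2 / α)) * heatKernel (u ^ 2 / α) a)
      = 2 / (√(2 * α) * √π) * exp (-(u ^ 2 + (a * √(2 * α) / 2) ^ 2 / u ^ 2)) := by
  have hβ : √(2 * α) ^ 2 = 2 * α := sq_sqrt (by positivity)
  have hsqrt : √(2 * π * (u ^ 2 / α)) = u * √(2 * α) * √π / α := by
    rw [sqrt_eq_iff_eq_sq (by positivity) (by positivity), div_pow, mul_pow, mul_pow, hβ,
      sq_sqrt pi_pos.le]
    field_simp
  have hexp : exp (-α * (u ^ 2 / α)) * exp (-a ^ 2 / (2 * (u ^ 2 / α)))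
      = exp (-(u ^ 2 + (a * √(2 * α) / 2) ^ 2 / u ^ 2)) := by
    rw [← exp_add, div_pow, mul_pow, hβ]
    congr 1
    field_simp
    ring
  rw [heatKernel, hsqrt, smul_eq_mul, ← hexp]
  field_simp

theorem integral_exp_mul_heatKernel {α a : ℝ} (hα : 0 < α) (ha : 0 < a) :
    ∫ t in Ioi 0, exp (-α * t) * heatKernel t a = exp (-√(2 * α) * a) / √(2 * α) := by
  have hβ : 0 < √(2 * α) := sqrt_pos.2 (by positivity)
  rw [← integral_Ioi_comp_sq_div hα, setIntegral_congr_fun measurableSet_Ioi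
      fun u hu => sq_div_smul_exp_mul_heatKernel hα hu, integral_const_mul,
    integral_Ioi_exp_neg_sq_add_sq_div_sq (by positivity)]
  field_simp

theorem integrableOn_exp_mul_heatKernel {α a : ℝ} (hα : 0 < α) (ha : 0 < a) :
    IntegrableOn (fun t => exp (-α * t) * heatKernel t a) (Ioi 0) := by
  rw [← integrableOn_Ioi_comp_sq_div_iff hα]
  refine IntegrableOn.congr_fun ?_ (fun u hu => (sq_div_smul_exp_mul_heatKernel hα hu).symm)
    measurableSet_Ioi
  exact (integrableOn_Ioi_exp_neg_sq_add_sq_div_sq (by positivity)).const_mul _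

theorem heatKernel_sub_heatKernel_nonneg {t x y : ℝ} (ht : 0 ≤ t) (hx : 0 ≤ x) (hy : 0 ≤ y) :
    0 ≤ heatKernel t (y - x) - heatKernel t (y + x) := by
  have hsq : (y - x) ^ 2 ≤ (y + x) ^ 2 := by nlinarith [mul_nonneg hx hy]
  exact sub_nonneg.2 (div_le_div_of_nonneg_right (exp_le_exp.2
    (div_le_div_of_nonneg_right (neg_le_neg hsq) (by positivity))) (sqrt_nonneg _))

theorem integral_exp_mul_heatKernel_sub {α x y : ℝ} (hα : 0 < α) (hx : 0 < x) (hxy : x < y) :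
    ∫ t in Ioi 0, exp (-α * t) * (heatKernel t (y - x) - heatKernel t (y + x))
      = (exp (√(2 * α) * x) - exp (-√(2 * α) * x)) / √(2 * α) * exp (-√(2 * α) * y) := by
  simp_rw [mul_sub]
  rw [integral_sub (integrableOn_exp_mul_heatKernel hα (by linarith))
      (integrableOn_exp_mul_heatKernel hα (by linarith)),
    integral_exp_mul_heatKernel hα (by linarith), integral_exp_mul_heatKernel hα (by linarith),
    ← sub_div, div_mul_eq_mul_div, sub_mul, ← exp_add, ← exp_add]
  ring_nf

theorem integrableOn_exp_mul_heatKernel_sub {α x y : ℝ} (hα : 0 < α) (hx : 0 < x) (hxy : x < y) :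
    IntegrableOn (fun t => exp (-α * t) * (heatKernel t (y - x) - heatKernel t (y + x)))
      (Ioi 0) := by
  simp_rw [mul_sub]
  exact (integrableOn_exp_mul_heatKernel hα (by linarith)).sub
    (integrableOn_exp_mul_heatKernel hα (by linarith))

theorem integral_integral_swap_of_nonneg {α β : Type*} [MeasurableSpace α] [MeasurableSpace β]
    {μ : Measure α} {ν : Measure β} [SFinite μ] [SFinite ν] {f : α → β → ℝ}
    (hf : AEStronglyMeasurable (Function.uncurry f) (μ.prod ν))
    (hf_nonneg : ∀ᵐ y ∂ν, 0 ≤ᵐ[μ] fun x => f x y)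
    (hf_int : ∀ᵐ y ∂ν, Integrable (fun x => f x y) μ)
    (hf_int' : Integrable (fun y => ∫ x, f x y ∂μ) ν) :
    ∫ x, ∫ y, f x y ∂ν ∂μ = ∫ y, ∫ x, f x y ∂μ ∂ν := by
  refine integral_integral_swap ((integrable_prod_iff' hf).2 ⟨hf_int, hf_int'.congr ?_⟩)
  filter_upwards [hf_nonneg] with y hy
  exact integral_congr_ae (hy.mono fun x hx => (Real.norm_of_nonneg hx).symm)

theorem integrableOn_Ioi_mul_exp_neg_mul {k : ℝ} (a : ℝ) (hk : 0 < k) :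
    IntegrableOn (fun y => y * exp (-k * y)) (Ioi a) := by
  refine integrable_of_isBigO_exp_neg (half_pos hk) (by fun_prop) ?_
  have h := (isLittleO_pow_exp_pos_mul_atTop 1 (half_pos hk)).isBigO.mul
    (isBigO_refl (fun y => exp (-k * y)) atTop)
  refine h.congr (fun y => by simp) fun y => ?_
  rw [← exp_add]
  ring_nf

theorem integral_Ioi_mul_exp_neg_mul {k : ℝ} (a : ℝ) (hk : 0 < k) :
    ∫ y in Ioi a, y * exp (-k * y) = (a / k + 1 / k ^ 2) * exp (-k * a) := by
  have hderiv (y : ℝ) : HasDerivAt (fun y => -((y / k + 1 / k ^ 2) * exp (-k * y)))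
      (y * exp (-k * y)) y := by
    have := ((((hasDerivAt_id' y).div_const k).add_const (1 / k ^ 2)).mul
      ((hasDerivAt_id' y).const_mul (-k)).exp).neg
    exact this.congr_deriv (by field_simp; ring)
  have hlim : Tendsto (fun y => -((y / k + 1 / k ^ 2) * exp (-k * y))) atTop (nhds 0) := by
    have h := (tendsto_pow_mul_exp_neg_atTop_nhds_zero 1).add tendsto_exp_neg_atTop_nhds_zero
    have := (h.comp (tendsto_id.const_mul_atTop hk)).const_mul (-(1 / k ^ 2))
    convert this using 2 with y
    · simp only [Function.comp_apply, id, pow_one, neg_mul]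
      field_simp
    · simp
  rw [integral_Ioi_of_hasDerivAt_of_tendsto' (fun y _ => hderiv y)
    (integrableOn_Ioi_mul_exp_neg_mul a hk) hlim]
  ring

/-- Resolvent integral for Brownian motion absorbed at 0, for 0 < x < x₀:
∫₀^∞ e^{-αt} ∫_{x₀}^∞ y (e^{-(y-x)²/(2t)} − e^{-(y+x)²/(2t)})/√(2πt) dy dt
  = (1/α)(1/(2√(2α)) + x₀/2) e^{-√(2α)x₀} (e^{√(2α)x} − e^{-√(2α)x}). -/
theorem stmt15 (α x x₀ : ℝ) (hα : 0 < α) (hx : 0 < x) (hxx₀ : x < x₀) :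
    ∫ t in Ioi (0:ℝ), Real.exp (-α * t) *
        ∫ y in Ioi x₀,
          y * (Real.exp (-(y - x) ^ 2 / (2 * t)) - Real.exp (-(y + x) ^ 2 / (2 * t)))
            / Real.sqrt (2 * π * t)
      = (1 / α) * (1 / (2 * Real.sqrt (2 * α)) + x₀ / 2)
          * Real.exp (-Real.sqrt (2 * α) * x₀)
          * (Real.exp (Real.sqrt (2 * α) * x) - Real.exp (-Real.sqrt (2 * α) * x)) := by
  set β := √(2 * α)
  have hβ : 0 < β := sqrt_pos.2 (by positivity)
  set F : ℝ → ℝ → ℝ :=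
    fun t y => y * (exp (-α * t) * (heatKernel t (y - x) - heatKernel t (y + x)))
  have hF : ∀ y ∈ Ioi x₀,
      ∫ t in Ioi 0, F t y = (exp (β * x) - exp (-β * x)) / β * (y * exp (-β * y)) :=
    fun y hy => by
      rw [integral_const_mul, integral_exp_mul_heatKernel_sub hα hx (hxx₀.trans hy)]
      ring
  have hswap : ∫ t in Ioi 0, ∫ y in Ioi x₀, F t y = ∫ y in Ioi x₀, ∫ t in Ioi 0, F t y := by
    have hmeas : Measurable (Function.uncurry F) := by simp only [F, heatKernel]; fun_prop
    refine integral_integral_swap_of_nonneg hmeas.aestronglyMeasurable ?_ ?_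
      (IntegrableOn.congr_fun ((integrableOn_Ioi_mul_exp_neg_mul x₀ hβ).const_mul _)
        (fun y hy => (hF y hy).symm) measurableSet_Ioi)
    · filter_upwards [ae_restrict_mem measurableSet_Ioi] with y (hy : x₀ < y)
      filter_upwards [ae_restrict_mem measurableSet_Ioi] with t (ht : 0 < t)
      exact mul_nonneg (by linarith) (mul_nonneg (exp_pos _).le
        (heatKernel_sub_heatKernel_nonneg ht.le hx.le (by linarith)))
    · filter_upwards [ae_restrict_mem measurableSet_Ioi] with y (hy : x₀ < y)
      exact (integrableOn_exp_mul_heatKernel_sub hα hx (hxx₀.trans hy)).const_mul y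
  calc _ = ∫ t in Ioi 0, ∫ y in Ioi x₀, F t y := by
        refine setIntegral_congr_fun measurableSet_Ioi fun t _ => ?_
        rw [← integral_const_mul]
        congr 1 with y
        simp only [F, heatKernel]
        ring
    _ = ∫ y in Ioi x₀, (exp (β * x) - exp (-β * x)) / β * (y * exp (-β * y)) := by
        rw [hswap, setIntegral_congr_fun measurableSet_Ioi hF]
    _ = _ := by
        have hβ2 : β ^ 2 = 2 * α := sq_sqrt (by positivity)
        rw [integral_const_mul, integral_Ioi_mul_exp_neg_mul x₀ hβ]
        field_simp
        linear_combination (exp (-(β * x)) - exp (β * x)) * (1 + β * x₀) * hβ2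
end
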